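/- arXiv:1204.6142 — 4 statements merged into one kernel-verified Lean document; each statement's English description precedes it below -/
import Mathlib

section
/- Let p : ℚ^k → ℚ be a rational quasi-polynomial of total degree n ≥ 1 with period d ∈ ℚ_{>0}^k, i.e. p(r) = Σ_{|I|_1 ≤ n} p_I(r) r^I where the p_I are periodic with period d componentwise and p_I(r) is constant whenever |I|_1 = n. Suppose there is a set S ⊆ ℚ^k and constants c_U ∈ ℚ for U ∈ ℤ_{≥0}^k such that p(r + U ⊙ d) = c_U for all r ∈ S and all U ∈ ℤ_{≥0}^k, where ⊙ denotes componentwise multiplication. Then for each multi-index I with |I|_1 ≤ n, the restriction of p_I to S is a polynomial function of total degree n − |I|_1, of degree at most n − I_j in the variable r_j, and ∂p_I/∂r_j (r) = −(I_j + 1) p_{I + e_j}(r) for all I with |I|_1 < n and all r ∈ S. -/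
/-!
Freezing the periodic coefficients at `r` gives a polynomial `P_r(X) = ∑ p_I(r) X^I`, and
periodicity gives `p(r + U ⊙ d) = P_r(r + U ⊙ d)` for every `U ∈ ℕ^k`. For `r ∈ S` the shifted
polynomial `P_r(X + r)` therefore takes the value `c_U` at every point `U ⊙ d` of a grid with
infinite sides, so it is one polynomial `H` independent of `r`. Hence `P_r = H(X - r)`, and
`p_I(r)`, the coefficient of `X^I` in `H(X - r)`, is a polynomial in `r`. Expanding `(X - r)^J`
binomially gives its degree bounds, and `(a - m) C(a, m) = (m + 1) C(a, m + 1)` gives the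
derivative relation.
-/

open MvPolynomial

namespace MvPolynomial

section ShiftCoeff

variable {σ R : Type*} [Fintype σ] [CommRing R]

theorem coeff_prod_aeval_X (f : σ → Polynomial R) (M : σ →₀ ℕ) :
    coeff M (∏ j, Polynomial.aeval (X j : MvPolynomial σ R) (f j)) = ∏ j, (f j).coeff (M j) := by
  classical
  have hsum (j : σ) : Polynomial.aeval (X j : MvPolynomial σ R) (f j) =
      ∑ m ∈ (f j).support, monomial (Finsupp.single j m) ((f j).coeff m) := by
    conv_lhs => rw [(f j).as_sum_support]
    simp [map_sum, X_pow_eq_monomial, C_mul_monomial]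
  simp_rw [hsum, Finset.prod_univ_sum, ← monomial_sum_prod, coeff_sum, coeff_monomial]
  have hx (x : σ → ℕ) : (∑ j, Finsupp.single j (x j) = M) ↔ x = ⇑M := by
    rw [← Finsupp.equivFunOnFinite_symm_eq_sum, Equiv.symm_apply_eq]; rfl
  simp_rw [hx, Finset.sum_ite_eq']
  refine ite_eq_left_iff.mpr fun hM => ?_
  obtain ⟨j, hj⟩ : ∃ j, M j ∉ (f j).support := by simpa [Fintype.mem_piFinset] using hM
  exact (Finset.prod_eq_zero (Finset.mem_univ j) (Polynomial.notMem_support_iff.mp hj)).symm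

/-- Evaluated at `r`, this is the coefficient of `X ^ M` in `H (X - r)` (`eval_shiftCoeff`). -/
noncomputable def shiftCoeff (H : MvPolynomial σ R) (M : σ →₀ ℕ) : MvPolynomial σ R :=
  ∑ J ∈ H.support,
    monomial (J - M) (coeff J H * ∏ j, ((J j).choose (M j) * (-1) ^ (J j - M j) : R))

theorem eval_shiftCoeff (H : MvPolynomial σ R) (M : σ →₀ ℕ) (r : σ → R) :
    eval r (shiftCoeff H M) = coeff M (aeval (fun j => X j - C (r j)) H) := by
  conv_rhs => rw [H.as_sum]
  simp only [shiftCoeff, map_sum, coeff_sum, aeval_monomial, eval_monomial]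
  refine Finset.sum_congr rfl fun J _ => ?_
  have hfactor (j : σ) : (X j - C (r j) : MvPolynomial σ R) ^ J j =
      Polynomial.aeval (X j) ((Polynomial.X + Polynomial.C (-r j)) ^ J j) := by
    simp [sub_eq_add_neg]
  rw [Finsupp.prod_fintype _ _ fun _ => pow_zero _, Finsupp.prod_fintype _ _ fun _ => pow_zero _,
    algebraMap_eq, coeff_C_mul]
  simp_rw [hfactor, coeff_prod_aeval_X, Polynomial.coeff_X_add_C_pow, Finsupp.tsub_apply]
  rw [mul_assoc, ← Finset.prod_mul_distrib]
  congr 1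
  refine Finset.prod_congr rfl fun j _ => ?_
  rw [neg_pow]
  ring

theorem prod_choose_eq_zero_of_not_le {J M : σ →₀ ℕ} (h : ¬ M ≤ J) :
    ∏ j, ((J j).choose (M j) * (-1) ^ (J j - M j) : R) = 0 := by
  obtain ⟨j, hj⟩ : ∃ j, J j < M j := by simpa [Finsupp.le_def] using h
  exact Finset.prod_eq_zero (Finset.mem_univ j) (by simp [Nat.choose_eq_zero_of_lt hj])

theorem totalDegree_shiftCoeff_le (H : MvPolynomial σ R) (M : σ →₀ ℕ) :
    (shiftCoeff H M).totalDegree ≤ H.totalDegree - M.degree := by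
  refine (totalDegree_finsetSum _ _).trans (Finset.sup_le fun J hJ => ?_)
  by_cases hMJ : M ≤ J
  · refine (totalDegree_monomial_le _ _).trans ?_
    have hJ : J.degree ≤ H.totalDegree := le_totalDegree hJ
    have : (J - M).degree + M.degree = J.degree := by rw [← map_add, tsub_add_cancel_of_le hMJ]
    change (J - M).degree ≤ _
    omega
  · simp [prod_choose_eq_zero_of_not_le hMJ]

theorem degreeOf_shiftCoeff_le (H : MvPolynomial σ R) (M : σ →₀ ℕ) (i : σ) :
    (shiftCoeff H M).degreeOf i ≤ H.degreeOf i - M i := by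
  refine (degreeOf_sum_le _ _ _).trans <|
    Finset.sup_le fun J hJ => degreeOf_le_iff.mpr fun K hK => ?_
  rw [Finset.mem_singleton.mp (support_monomial_subset hK), Finsupp.tsub_apply]
  exact Nat.sub_le_sub_right (monomial_le_degreeOf i hJ) _

theorem choose_mul_neg_one_pow_mul_sub (a m : ℕ) :
    ((a.choose m : R) * (-1) ^ (a - m)) * ((a - m : ℕ) : R) =
      -(m + 1) * ((a.choose (m + 1) : R) * (-1) ^ (a - (m + 1))) := by
  rcases le_or_gt a m with h | h
  · simp [Nat.sub_eq_zero_of_le h, Nat.choose_eq_zero_of_lt (Nat.lt_succ_of_le h)]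
  · obtain ⟨t, rfl⟩ := Nat.exists_eq_add_of_lt h
    have hchoose : ((m + t + 1).choose (m + 1) : R) * (m + 1) = (m + t + 1).choose m * (t + 1) := by
      have := Nat.choose_succ_right_eq (m + t + 1) m
      rw [show m + t + 1 - m = t + 1 by omega] at this
      simpa using congrArg (Nat.cast : ℕ → R) this
    rw [show m + t + 1 - m = t + 1 by omega, show m + t + 1 - (m + 1) = t by omega]
    push_cast
    linear_combination (-1) ^ t * hchoose

theorem pderiv_shiftCoeff (H : MvPolynomial σ R) (M : σ →₀ ℕ) (i : σ) :
    pderiv i (shiftCoeff H M) = (-(M i + 1) : R) • shiftCoeff H (M + Finsupp.single i 1) := by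
  classical
  simp only [shiftCoeff, map_sum, pderiv_monomial, Finset.smul_sum, smul_monomial, tsub_tsub]
  refine Finset.sum_congr rfl fun J _ => congrArg _ ?_
  rw [Fintype.prod_eq_mul_prod_compl i, Fintype.prod_eq_mul_prod_compl i]
  have hrest : ∏ j ∈ {i}ᶜ, ((J j).choose ((M + Finsupp.single i 1 : σ →₀ ℕ) j) *
      (-1) ^ (J j - (M + Finsupp.single i 1 : σ →₀ ℕ) j) : R) =
      ∏ j ∈ {i}ᶜ, ((J j).choose (M j) * (-1) ^ (J j - M j) : R) :=
    Finset.prod_congr rfl fun j hj => by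
      rw [Finsupp.add_apply, Finsupp.single_eq_of_ne (by simpa using hj), add_zero]
  rw [hrest, Finsupp.tsub_apply, Finsupp.add_apply, Finsupp.single_eq_same, smul_eq_mul]
  linear_combination (coeff J H * ∏ j ∈ {i}ᶜ, ((J j).choose (M j) * (-1) ^ (J j - M j) : R)) *
    choose_mul_neg_one_pow_mul_sub (R := R) (J i) (M i)

end ShiftCoeff

section AffineSubstitution

variable {σ τ R : Type*} [CommRing R]

theorem totalDegree_aeval_le (f : σ → MvPolynomial τ R) (hf : ∀ j, (f j).totalDegree ≤ 1)
    (P : MvPolynomial σ R) : (aeval f P).totalDegree ≤ P.totalDegree := by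
  conv_lhs => rw [P.as_sum]
  rw [map_sum]
  refine (totalDegree_finsetSum _ _).trans (Finset.sup_le fun J hJ => ?_)
  rw [aeval_monomial, algebraMap_eq]
  refine (totalDegree_mul _ _).trans ?_
  rw [totalDegree_C, zero_add]
  refine (totalDegree_finsetProd _ _).trans <|
    (Finset.sum_le_sum fun j _ => ?_).trans (le_totalDegree hJ)
  exact (totalDegree_pow _ _).trans ((Nat.mul_le_mul_left _ (hf j)).trans_eq (mul_one _))

theorem totalDegree_X_add_C_le (j : σ) (c : R) : (X j + C c).totalDegree ≤ 1 := by
  refine (totalDegree_add _ _).trans (max_le ?_ (by simp))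
  exact (totalDegree_monomial_le _ _).trans (by simp)

theorem eval_aeval_X_add_C (P : MvPolynomial σ R) (r x : σ → R) :
    eval x (aeval (fun j => X j + C (r j)) P) = eval (x + r) P := by
  rw [aeval_eq_bind₁, eval, eval₂Hom_bind₁]
  simp only [map_add, eval₂Hom_X', eval₂Hom_C, RingHom.id_apply]
  rfl

theorem aeval_X_sub_C_aeval_X_add_C (P : MvPolynomial σ R) (r : σ → R) :
    aeval (fun j => X j - C (r j)) (aeval (fun j => X j + C (r j)) P) = P := by
  rw [← AlgHom.comp_apply, comp_aeval]
  simp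

end AffineSubstitution

end MvPolynomial

theorem apply_add_natCast_mul_eq_of_update_add {ι R β : Type*} [Fintype ι] [DecidableEq ι]
    [Semiring R] {f : (ι → R) → β} {d : ι → R}
    (hper : ∀ (i : ι) (r : ι → R), f (Function.update r i (r i + d i)) = f r)
    (U : ι → ℕ) (r : ι → R) : f (fun j => r j + U j * d j) = f r := by
  have hsingle (i : ι) : Function.Periodic f (Pi.single i (d i)) := fun r => by
    rw [← hper i r]
    congr 1
    ext j
    rcases eq_or_ne j i with rfl | hj <;> simp [*]
  have hsum : Function.Periodic f (∑ i, U i • Pi.single i (d i)) :=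
    Finset.sum_induction _ (Function.Periodic f) (fun _ _ ha hb => ha.add_period hb)
      (fun _ => by rw [add_zero]) (fun i _ => (hsingle i).nsmul (U i))
  convert hsum r using 2
  ext j
  simp [Finset.sum_apply, Pi.single_apply, nsmul_eq_mul]

section QuasiPolynomial

variable {K : Type*} [CommRing K] {k n : ℕ}

/-- The quasi-polynomial `∑ p_I(r) r^I` with its periodic coefficients frozen at `r`. -/
noncomputable def frozenPoly (n : ℕ) (pc : (Fin k → ℕ) → (Fin k → K) → K) (r : Fin k → K) :
    MvPolynomial (Fin k) K :=
  ∑ I ∈ Finset.univ.filter (fun I : Fin k → Fin (n + 1) => (∑ j, (I j : ℕ)) ≤ n),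
    monomial (Finsupp.equivFunOnFinite.symm fun j => (I j : ℕ)) (pc (fun j => I j) r)

theorem eval_frozenPoly (pc : (Fin k → ℕ) → (Fin k → K) → K) (r x : Fin k → K) :
    eval x (frozenPoly n pc r) =
      ∑ I ∈ Finset.univ.filter (fun I : Fin k → Fin (n + 1) => (∑ j, (I j : ℕ)) ≤ n),
        pc (fun j => I j) r * ∏ j, x j ^ (I j : ℕ) := by
  simp [frozenPoly, eval_monomial, Finsupp.prod_fintype]

theorem coeff_frozenPoly (pc : (Fin k → ℕ) → (Fin k → K) → K) (r : Fin k → K)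
    {M : Fin k → ℕ} (hM : ∑ j, M j ≤ n) :
    coeff (Finsupp.equivFunOnFinite.symm M) (frozenPoly n pc r) = pc M r := by
  have hlt (j : Fin k) : M j < n + 1 := Nat.lt_succ_of_le <|
    (Finset.single_le_sum (fun _ _ => Nat.zero_le _) (Finset.mem_univ j)).trans hM
  simp only [frozenPoly, coeff_sum, coeff_monomial, EmbeddingLike.apply_eq_iff_eq]
  rw [Finset.sum_eq_single_of_mem (fun j => ⟨M j, hlt j⟩) (by simpa using hM), if_pos rfl]
  intro I _ hI
  exact if_neg fun h => hI (funext fun j => Fin.ext (congrFun h j))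

theorem totalDegree_frozenPoly_le (pc : (Fin k → ℕ) → (Fin k → K) → K) (r : Fin k → K) :
    (frozenPoly n pc r).totalDegree ≤ n := by
  refine (totalDegree_finsetSum _ _).trans (Finset.sup_le fun I hI => ?_)
  refine (totalDegree_monomial_le _ _).trans ?_
  rw [Finsupp.sum_fintype _ _ fun _ => rfl]
  simpa using hI

theorem exists_frozenPoly_eq_aeval [IsDomain K] [CharZero K] {p : (Fin k → K) → K}
    {pc : (Fin k → ℕ) → (Fin k → K) → K} {d : Fin k → K} (hd : ∀ i, d i ≠ 0)
    (hform : ∀ r : Fin k → K,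
      p r = ∑ I ∈ Finset.univ.filter
          (fun I : Fin k → Fin (n + 1) => (∑ j, (I j : ℕ)) ≤ n),
        pc (fun j => (I j : ℕ)) r * ∏ j, r j ^ (I j : ℕ))
    (hper : ∀ (I : Fin k → ℕ) (i : Fin k) (r : Fin k → K),
      pc I (Function.update r i (r i + d i)) = pc I r)
    {S : Set (Fin k → K)} {c : (Fin k → ℕ) → K}
    (hval : ∀ r ∈ S, ∀ U : Fin k → ℕ, p (fun j => r j + U j * d j) = c U) :
    ∃ H : MvPolynomial (Fin k) K, H.totalDegree ≤ n ∧
      ∀ r ∈ S, frozenPoly n pc r = aeval (fun j => X j - C (r j)) H := by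
  rcases S.eq_empty_or_nonempty with rfl | ⟨r₀, hr₀⟩
  · exact ⟨0, by simp, by simp⟩
  set shifted := fun r => aeval (fun j => X j + C (r j)) (frozenPoly n pc r)
  have hgrid (r : Fin k → K) (hr : r ∈ S) (U : Fin k → ℕ) :
      eval (fun j => U j * d j) (shifted r) = c U := by
    rw [eval_aeval_X_add_C, eval_frozenPoly, ← hval r hr U, hform]
    refine Finset.sum_congr rfl fun I _ => ?_
    rw [apply_add_natCast_mul_eq_of_update_add (hper _)]
    simp [add_comm]
  have hshifted (r : Fin k → K) (hr : r ∈ S) : shifted r = shifted r₀ := by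
    refine funext_set (fun j => Set.range fun m : ℕ => (m : K) * d j) (fun j => ?_) fun x hx => ?_
    · exact Set.infinite_range_of_injective fun a b h => by
        exact_mod_cast mul_right_cancel₀ (hd j) h
    · choose U hU using fun j => hx j (Set.mem_univ j)
      obtain rfl : x = fun j => U j * d j := funext fun j => (hU j).symm
      rw [hgrid r hr, hgrid r₀ hr₀]
  refine ⟨shifted r₀, ?_, fun r hr => ?_⟩
  · exact (totalDegree_aeval_le _ (fun j => totalDegree_X_add_C_le j _) _).trans
      (totalDegree_frozenPoly_le pc r₀)
  · rw [← hshifted r hr, aeval_X_sub_C_aeval_X_add_C]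

end QuasiPolynomial

theorem stmt4_general {k n : ℕ}
    (p : (Fin k → ℚ) → ℚ) (pc : (Fin k → ℕ) → (Fin k → ℚ) → ℚ)
    (d : Fin k → ℚ) (hd : ∀ i, 0 < d i)
    -- quasi-polynomial form `p(r) = Σ_{|I|₁ ≤ n} p_I(r) r^I`
    (hform : ∀ r : Fin k → ℚ,
      p r = ∑ I ∈ Finset.univ.filter
          (fun I : Fin k → Fin (n + 1) => (∑ j, (I j : ℕ)) ≤ n),
        pc (fun j => (I j : ℕ)) r * ∏ j, r j ^ (I j : ℕ))
    -- each coefficient is periodic with period `d i` in the `i`-th component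
    (hper : ∀ (I : Fin k → ℕ) (i : Fin k) (r : Fin k → ℚ),
      pc I (Function.update r i (r i + d i)) = pc I r)
    (S : Set (Fin k → ℚ)) (c : (Fin k → ℕ) → ℚ)
    (hval : ∀ r ∈ S, ∀ U : Fin k → ℕ, p (fun j => r j + U j * d j) = c U) :
    ∃ q : (Fin k → ℕ) → MvPolynomial (Fin k) ℚ,
      ∀ I : Fin k → ℕ, (∑ j, I j) ≤ n →
        (q I).totalDegree ≤ n - (∑ j, I j) ∧
        (∀ h : Fin k, (q I).degreeOf h ≤ n - I h) ∧
        (∀ r ∈ S, pc I r = MvPolynomial.eval r (q I)) ∧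
        ((∑ j, I j) < n → ∀ j : Fin k, ∀ r ∈ S,
          MvPolynomial.eval r (MvPolynomial.pderiv j (q I)) =
            -((I j : ℚ) + 1) * pc (Function.update I j (I j + 1)) r) := by
  obtain ⟨H, hH, hfrozen⟩ :=
    exists_frozenPoly_eq_aeval (fun i => (hd i).ne') hform hper hval
  have hpc (I : Fin k → ℕ) (hI : ∑ j, I j ≤ n) (r : Fin k → ℚ) (hr : r ∈ S) :
      pc I r = eval r (shiftCoeff H (Finsupp.equivFunOnFinite.symm I)) := by
    rw [eval_shiftCoeff, ← hfrozen r hr, coeff_frozenPoly pc r hI]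
  refine ⟨fun I => shiftCoeff H (Finsupp.equivFunOnFinite.symm I), fun I hI =>
    ⟨?_, fun h => ?_, hpc I hI, fun hlt j r hr => ?_⟩⟩
  · refine (totalDegree_shiftCoeff_le _ _).trans ?_
    rw [Finsupp.degree_eq_sum]
    exact Nat.sub_le_sub_right hH _
  · exact (degreeOf_shiftCoeff_le _ _ _).trans
      (Nat.sub_le_sub_right ((degreeOf_le_totalDegree _ _).trans hH) _)
  · have hupdate : Finsupp.equivFunOnFinite.symm I + Finsupp.single j 1 =
        Finsupp.equivFunOnFinite.symm (Function.update I j (I j + 1)) := by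
      ext i
      rcases eq_or_ne i j with rfl | hi <;> simp [*]
    have hsum : ∑ i, Function.update I j (I j + 1) i = ∑ i, I i + 1 := by
      rw [Finset.sum_update_of_mem (Finset.mem_univ j),
        Finset.sum_eq_add_sum_sdiff_singleton_of_mem (Finset.mem_univ j) I]
      ring
    rw [pderiv_shiftCoeff, smul_eval, hupdate, ← hpc _ (by omega) r hr]
    simp

theorem stmt4 {k n : ℕ} (hn : 1 ≤ n)
    (p : (Fin k → ℚ) → ℚ) (pc : (Fin k → ℕ) → (Fin k → ℚ) → ℚ)
    (d : Fin k → ℚ) (hd : ∀ i, 0 < d i)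
    -- quasi-polynomial form `p(r) = Σ_{|I|₁ ≤ n} p_I(r) r^I`
    (hform : ∀ r : Fin k → ℚ,
      p r = ∑ I ∈ Finset.univ.filter
          (fun I : Fin k → Fin (n + 1) => (∑ j, (I j : ℕ)) ≤ n),
        pc (fun j => (I j : ℕ)) r * ∏ j, r j ^ (I j : ℕ))
    -- each coefficient is periodic with period `d i` in the `i`-th component
    (hper : ∀ (I : Fin k → ℕ) (i : Fin k) (r : Fin k → ℚ),
      pc I (Function.update r i (r i + d i)) = pc I r)
    -- constant leading coefficients
    (hlead : ∀ I : Fin k → ℕ, (∑ j, I j) = n → ∀ r r' : Fin k → ℚ, pc I r = pc I r')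
    (S : Set (Fin k → ℚ)) (c : (Fin k → ℕ) → ℚ)
    (hval : ∀ r ∈ S, ∀ U : Fin k → ℕ, p (fun j => r j + U j * d j) = c U) :
    ∃ q : (Fin k → ℕ) → MvPolynomial (Fin k) ℚ,
      ∀ I : Fin k → ℕ, (∑ j, I j) ≤ n →
        (q I).totalDegree ≤ n - (∑ j, I j) ∧
        (∀ h : Fin k, (q I).degreeOf h ≤ n - I h) ∧
        (∀ r ∈ S, pc I r = MvPolynomial.eval r (q I)) ∧
        ((∑ j, I j) < n → ∀ j : Fin k, ∀ r ∈ S,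
          MvPolynomial.eval r (MvPolynomial.pderiv j (q I)) =
            -((I j : ℚ) + 1) * pc (Function.update I j (I j + 1)) r) :=
  stmt4_general p pc d hd hform hper S c hval
end

section
/- Let n ≥ 1, k ≥ 1, and for each multi-index I ∈ {0,…,n}^k with |I|_1 ≤ n−1 and each l ∈ {1,…,k} suppose functions q_I^l, p_I : S → ℚ on a set S ⊆ ℚ^k satisfy q_I^l(r) = Σ_{j=I_l+1}^{n−|I|_1+I_l} p_{(I_1,…,I_{l−1}, j, I_{l+1},…,I_k)}(r) · c_I^l(j) for nonzero constants c_I^l(j), and each q_I^l is a polynomial of total degree n−1−|I|_1 in r and of degree at most n−1−I_h in r_h for every h. Then for every J ∈ {0,…,n}^k with 1 ≤ |J|_1 ≤ n, p_J is a polynomial on S of total degree n−|J|_1 and of degree at most n−J_h in r_h for every h ∈ {1,…,k}. -/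
/-- `f : ℚ^k → ℚ` restricted to `S` is a polynomial function of total degree at
most `D` and of degree at most `Dco h` in the `h`-th variable. -/
def IsPolyOn {k : ℕ} (S : Set (Fin k → ℚ)) (f : (Fin k → ℚ) → ℚ)
    (D : ℕ) (Dco : Fin k → ℕ) : Prop :=
  ∃ q : MvPolynomial (Fin k) ℚ,
    q.totalDegree ≤ D ∧ (∀ h : Fin k, q.degreeOf h ≤ Dco h) ∧
    ∀ r ∈ S, f r = MvPolynomial.eval r q

/-!
Descending induction on `|J|₁`. If `J_l ≥ 1` and `I = J - e_l`, the relation defining `q_I^l`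
is triangular: `q_I^l = c_I^l(J_l) p_J + Σ_{j > J_l} c_I^l(j) p_{I + j e_l}`, where every
`p_{I + j e_l}` on the right has `|·|₁ > |J|₁` and degree bounds no weaker than those wanted
for `p_J`. Since `c_I^l(J_l) ≠ 0`, solving for `p_J` exhibits it as a linear combination of
polynomials obeying these bounds.
-/

open Finset MvPolynomial

theorem Finset.sum_univ_update_add {ι M : Type*} [Fintype ι] [DecidableEq ι] [AddCommMonoid M]
    (f : ι → M) (i : ι) (a : M) :
    ∑ j, Function.update f i a j + f i = ∑ j, f j + a := by
  rw [sum_update_of_mem (mem_univ i), sum_eq_add_sum_sdiff_singleton_of_mem (mem_univ i) f]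
  abel

namespace IsPolyOn

variable {k : ℕ} {S : Set (Fin k → ℚ)} {f g : (Fin k → ℚ) → ℚ} {D : ℕ} {Dco : Fin k → ℕ}

theorem congr (hf : IsPolyOn S f D Dco) (hfg : ∀ r ∈ S, f r = g r) : IsPolyOn S g D Dco := by
  obtain ⟨P, hdeg, hdegOf, hP⟩ := hf
  exact ⟨P, hdeg, hdegOf, fun r hr => (hfg r hr).symm.trans (hP r hr)⟩

theorem mono {D' : ℕ} {Dco' : Fin k → ℕ} (hf : IsPolyOn S f D Dco) (hD : D ≤ D')
    (hDco : ∀ h, Dco h ≤ Dco' h) : IsPolyOn S f D' Dco' := by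
  obtain ⟨P, hdeg, hdegOf, hP⟩ := hf
  exact ⟨P, hdeg.trans hD, fun h => (hdegOf h).trans (hDco h), hP⟩

theorem zero : IsPolyOn S 0 D Dco :=
  ⟨0, by simp, by simp [degreeOf_zero], by simp⟩

theorem add (hf : IsPolyOn S f D Dco) (hg : IsPolyOn S g D Dco) :
    IsPolyOn S (f + g) D Dco := by
  obtain ⟨P, hPdeg, hPdegOf, hP⟩ := hf
  obtain ⟨Q, hQdeg, hQdegOf, hQ⟩ := hg
  refine ⟨P + Q, (totalDegree_add P Q).trans (max_le hPdeg hQdeg),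
    fun h => (degreeOf_add_le h P Q).trans (max_le (hPdegOf h) (hQdegOf h)), fun r hr => ?_⟩
  simp [hP r hr, hQ r hr]

theorem sub (hf : IsPolyOn S f D Dco) (hg : IsPolyOn S g D Dco) :
    IsPolyOn S (f - g) D Dco := by
  obtain ⟨P, hPdeg, hPdegOf, hP⟩ := hf
  obtain ⟨Q, hQdeg, hQdegOf, hQ⟩ := hg
  refine ⟨P - Q, (totalDegree_sub P Q).trans (max_le hPdeg hQdeg),
    fun h => (degreeOf_sub_le h P Q).trans (max_le (hPdegOf h) (hQdegOf h)), fun r hr => ?_⟩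
  simp [hP r hr, hQ r hr]

theorem smul (a : ℚ) (hf : IsPolyOn S f D Dco) : IsPolyOn S (a • f) D Dco := by
  obtain ⟨P, hdeg, hdegOf, hP⟩ := hf
  refine ⟨a • P, (totalDegree_smul_le a P).trans hdeg, fun h => ?_, fun r hr => ?_⟩
  · rw [smul_eq_C_mul]
    exact (degreeOf_C_mul_le P h a).trans (hdegOf h)
  · simp [hP r hr]

theorem sum {ι : Type*} {s : Finset ι} {F : ι → (Fin k → ℚ) → ℚ}
    (hF : ∀ i ∈ s, IsPolyOn S (F i) D Dco) : IsPolyOn S (∑ i ∈ s, F i) D Dco :=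
  Finset.sum_induction F (fun f => IsPolyOn S f D Dco) (fun _ _ => add) zero hF

theorem of_sum_Icc_eq {F : ℕ → (Fin k → ℚ) → ℚ} {c : ℕ → ℚ} {a b : ℕ} (hab : a ≤ b)
    (hca : c a ≠ 0) (hg : IsPolyOn S g D Dco) (hF : ∀ j ∈ Ioc a b, IsPolyOn S (F j) D Dco)
    (hgF : ∀ r ∈ S, g r = ∑ j ∈ Icc a b, F j r * c j) : IsPolyOn S (F a) D Dco := by
  refine ((hg.sub (sum fun j hj => (hF j hj).smul (c j))).smul (c a)⁻¹).congr fun r hr => ?_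
  simp only [Pi.smul_apply, Pi.sub_apply, Finset.sum_apply, smul_eq_mul, hgF r hr,
    ← add_sum_Ioc_eq_sum_Icc hab, mul_comm (c _) (F _ r), add_sub_cancel_right]
  field_simp

end IsPolyOn

section TriangularSystem

variable {k n : ℕ} {S : Set (Fin k → ℚ)} {p : (Fin k → ℕ) → (Fin k → ℚ) → ℚ}
  {q : (Fin k → ℕ) → Fin k → (Fin k → ℚ) → ℚ} {c : (Fin k → ℕ) → Fin k → ℕ → ℚ}

theorem isPolyOn_of_isPolyOn_update (hc : ∀ I l j, c I l j ≠ 0)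
    (hq : ∀ I : Fin k → ℕ, (∀ j, I j ≤ n) → (∑ j, I j) ≤ n - 1 → ∀ l : Fin k,
      ∀ r ∈ S, q I l r =
        ∑ j ∈ Icc (I l + 1) (n - (∑ j', I j') + I l), p (Function.update I l j) r * c I l j)
    (hqpoly : ∀ I : Fin k → ℕ, (∀ j, I j ≤ n) → (∑ j, I j) ≤ n - 1 → ∀ l : Fin k,
      IsPolyOn S (q I l) (n - 1 - (∑ j, I j)) (fun h => n - 1 - I h))
    {J : Fin k → ℕ} (hJn : ∀ j, J j ≤ n) (hJsum : ∑ j, J j ≤ n) {l : Fin k} (hl : J l ≠ 0)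
    (hupd : ∀ j ∈ Ioc (J l) (n - ∑ i, J i + J l),
      IsPolyOn S (p (Function.update J l j)) (n - ∑ i, J i) (fun h => n - J h)) :
    IsPolyOn S (p J) (n - ∑ i, J i) (fun h => n - J h) := by
  have hIsum := Finset.sum_univ_update_add J l (J l - 1)
  set I := Function.update J l (J l - 1)
  have hIl : I l = J l - 1 := by simp [I]
  have hIupd (j : ℕ) : Function.update I l j = Function.update J l j := by simp [I]
  have hIn (h : Fin k) : I h ≤ n := by
    rcases eq_or_ne h l with rfl | hne
    · have := hJn h; omega
    · simpa [I, hne] using hJn h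
  set T := n - ∑ j, J j + J l
  have hJl : J l ≤ ∑ j, J j := single_le_sum (fun _ _ => Nat.zero_le _) (mem_univ l)
  have hQ : IsPolyOn S (q I l) (n - ∑ j, J j) (fun h => n - J h) := by
    refine (hqpoly I hIn (by omega) l).mono (by omega) fun h => ?_
    rcases eq_or_ne h l with rfl | hne
    · omega
    · simp only [I, Function.update_of_ne hne]
      omega
  have hQsum (r) (hr : r ∈ S) : q I l r = ∑ j ∈ Icc (J l) T, p (Function.update J l j) r * c I l j := by
    have hlow : I l + 1 = J l := by omega
    have hhigh : n - ∑ j, I j + I l = T := by omega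
    simp only [hq I hIn (by omega) l r hr, hlow, hhigh, hIupd]
  simpa using IsPolyOn.of_sum_Icc_eq (F := fun j => p (Function.update J l j)) (by omega)
    (hc I l (J l)) hQ hupd hQsum

end TriangularSystem

theorem stmt5_general {k n : ℕ}
    (S : Set (Fin k → ℚ))
    (p : (Fin k → ℕ) → (Fin k → ℚ) → ℚ)
    (q : (Fin k → ℕ) → Fin k → (Fin k → ℚ) → ℚ)
    (c : (Fin k → ℕ) → Fin k → ℕ → ℚ)
    (hc : ∀ I l j, c I l j ≠ 0)
    (hq : ∀ I : Fin k → ℕ, (∀ j, I j ≤ n) → (∑ j, I j) ≤ n - 1 → ∀ l : Fin k,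
      ∀ r ∈ S, q I l r =
        ∑ j ∈ Finset.Icc (I l + 1) (n - (∑ j', I j') + I l),
          p (Function.update I l j) r * c I l j)
    (hqpoly : ∀ I : Fin k → ℕ, (∀ j, I j ≤ n) → (∑ j, I j) ≤ n - 1 → ∀ l : Fin k,
      IsPolyOn S (q I l) (n - 1 - (∑ j, I j)) (fun h => n - 1 - I h)) :
    ∀ J : Fin k → ℕ, (∀ j, J j ≤ n) → 1 ≤ (∑ j, J j) → (∑ j, J j) ≤ n →
      IsPolyOn S (p J) (n - (∑ j, J j)) (fun h => n - J h) := by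
  intro J
  induction hd : n - ∑ j, J j using Nat.strong_induction_on generalizing J with
  | _ d ih =>
  intro hJn hJ1 hJsum
  subst hd
  obtain ⟨l, hl⟩ : ∃ l, J l ≠ 0 := by
    by_contra! h0
    simp [h0] at hJ1
  refine isPolyOn_of_isPolyOn_update hc hq hqpoly hJn hJsum hl fun j hj => ?_
  obtain ⟨hlj, hjT⟩ := mem_Ioc.1 hj
  have hsum := Finset.sum_univ_update_add J l j
  have hJl : J l ≤ ∑ i, J i := single_le_sum (fun _ _ => Nat.zero_le _) (mem_univ l)
  have hJ_le : J ≤ Function.update J l j := le_update_self_iff.2 hlj.le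
  have hupd_le : ∀ h, Function.update J l j h ≤ n :=
    (Function.forall_update_iff J fun _ z => z ≤ n).2 ⟨by omega, fun h _ => hJn h⟩
  exact (ih _ (by omega) _ rfl hupd_le (by omega) (by omega)).mono (by omega)
    fun h => Nat.sub_le_sub_left (hJ_le h) n

theorem stmt5 {k n : ℕ} (hn : 1 ≤ n) (hk : 1 ≤ k)
    (S : Set (Fin k → ℚ))
    (p : (Fin k → ℕ) → (Fin k → ℚ) → ℚ)
    (q : (Fin k → ℕ) → Fin k → (Fin k → ℚ) → ℚ)
    (c : (Fin k → ℕ) → Fin k → ℕ → ℚ)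
    (hc : ∀ I l j, c I l j ≠ 0)
    (hq : ∀ I : Fin k → ℕ, (∀ j, I j ≤ n) → (∑ j, I j) ≤ n - 1 → ∀ l : Fin k,
      ∀ r ∈ S, q I l r =
        ∑ j ∈ Finset.Icc (I l + 1) (n - (∑ j', I j') + I l),
          p (Function.update I l j) r * c I l j)
    (hqpoly : ∀ I : Fin k → ℕ, (∀ j, I j ≤ n) → (∑ j, I j) ≤ n - 1 → ∀ l : Fin k,
      IsPolyOn S (q I l) (n - 1 - (∑ j, I j)) (fun h => n - 1 - I h)) :
    ∀ J : Fin k → ℕ, (∀ j, J j ≤ n) → 1 ≤ (∑ j, J j) → (∑ j, J j) ≤ n →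
      IsPolyOn S (p J) (n - (∑ j, J j)) (fun h => n - J h) :=
  stmt5_general S p q c hc hq hqpoly
end

section
/- Let C_2 = [−1,1]^2 ⊂ ℝ^2 and T = conv{(0,1), (1,−1), (−1,−1)}. Then for all r, s ∈ ℚ_{≥0}, the Minkowski sum rC_2 + sT equals {x ∈ ℝ^2 : −(r+s) ≤ x_1 ≤ r+s, −(r+s) ≤ x_2 ≤ r+s, 2x_1 + x_2 ≤ 3r+s, −2x_1 + x_2 ≤ 3r+s}. -/
open scoped Pointwise

/-- The square `C₂ = conv{(1,1), (−1,1), (−1,−1), (1,−1)} = [−1,1]²`. -/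
def Csquare : Set (ℝ × ℝ) :=
  convexHull ℝ {((1 : ℝ), (1 : ℝ)), (-1, 1), (-1, -1), (1, -1)}

/-- The triangle `T = conv{(0,1), (1,−1), (−1,−1)}`. -/
def Ttriangle : Set (ℝ × ℝ) :=
  convexHull ℝ {((0 : ℝ), (1 : ℝ)), (1, -1), (-1, -1)}

/-!
Both summands have half-plane descriptions: `r • C₂ = [-r, r]²` is a product of segments, and
`s • T = {x | -s ≤ x₂, 2 |x₁| + x₂ ≤ s}`, the latter read off from barycentric coordinates. The
inclusion `⊆` is then linear arithmetic. Conversely, for `x` in the hexagon put the triangle summand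
at height `β = max (-s) (x₂ - r)`; there `s • T` has the horizontal slice `[-w, w]` with
`w = (s - β) / 2`, and the hexagon inequalities say exactly that `x₁ ∈ [-w, w] + [-r, r]`.
-/

open Set

theorem sum_smul_mem_smul_convexHull {𝕜 E ι : Type*} [Field 𝕜] [LinearOrder 𝕜]
    [IsStrictOrderedRing 𝕜] [AddCommGroup E] [Module 𝕜 E] {s : Finset ι} (hs : s.Nonempty)
    {w : ι → 𝕜} {z : ι → E} {V : Set E} (hw : ∀ i ∈ s, 0 ≤ w i) (hz : ∀ i ∈ s, z i ∈ V) :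
    ∑ i ∈ s, w i • z i ∈ (∑ i ∈ s, w i) • convexHull 𝕜 V := by
  rcases (Finset.sum_nonneg hw).eq_or_lt with h | h
  · have hw0 : ∀ i ∈ s, w i = 0 := (Finset.sum_eq_zero_iff_of_nonneg hw).1 h.symm
    obtain ⟨i, hi⟩ := hs
    rw [← h, zero_smul_set ⟨z i, subset_convexHull 𝕜 V (hz i hi)⟩,
      Finset.sum_eq_zero fun i hi ↦ by rw [hw0 i hi, zero_smul]]
    rfl
  · rw [← smul_inv_smul₀ h.ne' (∑ i ∈ s, w i • z i)]
    exact smul_mem_smul_set (s.centerMass_mem_convexHull hw h hz)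

theorem smul_Csquare {t : ℝ} (ht : 0 ≤ t) : t • Csquare = Icc (-t) t ×ˢ Icc (-t) t := by
  have hV : ({((1 : ℝ), (1 : ℝ)), (-1, 1), (-1, -1), (1, -1)} : Set (ℝ × ℝ)) =
      ({-1, 1} : Set ℝ) ×ˢ ({-1, 1} : Set ℝ) := by
    ext ⟨a, b⟩
    simp only [mem_insert_iff, mem_singleton_iff, mem_prod, Prod.mk.injEq]
    tauto
  have hI : t • Icc (-1 : ℝ) 1 = Icc (-t) t := by
    have := image_mul_left_Icc ht (by norm_num : (-1 : ℝ) ≤ 1)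
    rwa [mul_neg_one, mul_one] at this
  rw [Csquare, hV, convexHull_prod, convexHull_pair, segment_eq_Icc (by norm_num),
    smul_set_prod, hI]

theorem smul_Ttriangle {t : ℝ} (ht : 0 ≤ t) :
    t • Ttriangle = {x : ℝ × ℝ | -t ≤ x.2 ∧ 2 * x.1 + x.2 ≤ t ∧ -2 * x.1 + x.2 ≤ t} := by
  rw [Ttriangle]
  refine Subset.antisymm ?_ fun x ⟨h₁, h₂, h₃⟩ ↦ ?_
  · rw [← convexHull_smul]
    refine convexHull_min ?_ ?_
    · rintro _ ⟨v, hv, rfl⟩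
      simp only [mem_insert_iff, mem_singleton_iff] at hv
      rcases hv with rfl | rfl | rfl <;>
        simp only [Prod.smul_mk, smul_eq_mul, mem_ofPred_eq] <;> refine ⟨?_, ?_, ?_⟩ <;> linarith
    · rintro p ⟨hp₁, hp₂, hp₃⟩ q ⟨hq₁, hq₂, hq₃⟩ a b ha hb hab
      simp only [mem_ofPred_eq, Prod.fst_add, Prod.snd_add, Prod.smul_fst, Prod.smul_snd,
        smul_eq_mul]
      refine ⟨?_, ?_, ?_⟩ <;> nlinarith
  · -- the barycentric coordinates of `x` in `t • T`, multiplied by `t`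
    let w : Fin 3 → ℝ := ![(t + x.2) / 2, (t - x.2 + 2 * x.1) / 4, (t - x.2 - 2 * x.1) / 4]
    let z : Fin 3 → ℝ × ℝ := ![(0, 1), (1, -1), (-1, -1)]
    have key := sum_smul_mem_smul_convexHull Finset.univ_nonempty (w := w) (z := z)
      (V := {(0, 1), (1, -1), (-1, -1)})
      (fun i _ ↦ by fin_cases i <;> simp [w] <;> linarith) (fun i _ ↦ by fin_cases i <;> simp [z])
    have hw : ∑ i, w i = t := by simp [w, Fin.sum_univ_three]; ring
    have hx : ∑ i, w i • z i = x := by ext <;> simp [w, z, Fin.sum_univ_three] <;> ring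
    rwa [hw, hx] at key

theorem smul_Csquare_add_smul_Ttriangle {r s : ℝ} (hr : 0 ≤ r) (hs : 0 ≤ s) :
    r • Csquare + s • Ttriangle =
      {x : ℝ × ℝ | -(r + s) ≤ x.1 ∧ x.1 ≤ r + s ∧ -(r + s) ≤ x.2 ∧ x.2 ≤ r + s ∧
        2 * x.1 + x.2 ≤ 3 * r + s ∧ -2 * x.1 + x.2 ≤ 3 * r + s} := by
  rw [smul_Csquare hr, smul_Ttriangle hs]
  ext x
  constructor
  · rintro ⟨a, ⟨⟨ha₁, ha₁'⟩, ha₂, ha₂'⟩, b, ⟨hb₁, hb₂, hb₃⟩, rfl⟩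
    simp only [mem_ofPred_eq, Prod.fst_add, Prod.snd_add]
    refine ⟨?_, ?_, ?_, ?_, ?_, ?_⟩ <;> linarith
  · obtain ⟨x₁, x₂⟩ := x
    rintro ⟨h₁, h₂, h₃, h₄, h₅, h₆⟩
    obtain ⟨β, hβs, hβ₁, hβ₂, hx₁⟩ : ∃ β, -s ≤ β ∧ x₂ - r ≤ β ∧ β ≤ x₂ + r ∧
        x₁ ∈ Icc (-((s - β) / 2)) ((s - β) / 2) + Icc (-r) r := by
      refine ⟨max (-s) (x₂ - r), le_max_left _ _, le_max_right _ _,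
        max_le (by linarith) (by linarith), ?_⟩
      rcases max_choice (-s) (x₂ - r) with h | h <;>
        rw [h, Icc_add_Icc (by linarith) (by linarith)] <;> constructor <;> linarith
    obtain ⟨γ, ⟨hγ₁, hγ₂⟩, a, ha, rfl⟩ := hx₁
    refine ⟨(a, x₂ - β), ⟨ha, by linarith, by linarith⟩, (γ, β),
      ⟨hβs, by linarith, by linarith⟩, ?_⟩
    simp [add_comm]

theorem stmt9 (r s : ℚ) (hr : 0 ≤ r) (hs : 0 ≤ s) :
    (r : ℝ) • Csquare + (s : ℝ) • Ttriangle =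
      {x : ℝ × ℝ |
        -((r : ℝ) + s) ≤ x.1 ∧ x.1 ≤ (r : ℝ) + s ∧
        -((r : ℝ) + s) ≤ x.2 ∧ x.2 ≤ (r : ℝ) + s ∧
        2 * x.1 + x.2 ≤ 3 * (r : ℝ) + s ∧
        -2 * x.1 + x.2 ≤ 3 * (r : ℝ) + s} :=
  smul_Csquare_add_smul_Ttriangle (Rat.cast_nonneg.2 hr) (Rat.cast_nonneg.2 hs)
end

section
/- For the family P(a,b,c,d) = {(x,y) ∈ ℝ² : 2x+y ≤ a, −2x+y ≤ b, y ≤ c, −y ≤ d} with integer parameters a, b, c, d ≥ 0 satisfying c + d ≥ 0, a + b + 2d ≥ 0 and a + b − 2c ≥ 0 (quadrangle chamber), and with all fractional parts vanishing (a, b, c, d, (c−a)/2, (c−b)/2, (a+d)/2, (b+d)/2 ∈ ℤ), the number of lattice points of P(a,b,c,d) is Φ(a,b,c,d) = ½(d² − c² + bc + ac + bd + ad) + (a + b)/2 + d + 1. -/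
/-- `P(a,b,c,d) = {(x,y) ∈ ℝ² : 2x+y ≤ a, −2x+y ≤ b, y ≤ c, −y ≤ d}`. -/
def Pabcd (a b c d : ℚ) : Set (ℝ × ℝ) :=
  {p | 2 * p.1 + p.2 ≤ (a : ℝ) ∧ -2 * p.1 + p.2 ≤ (b : ℝ) ∧
       p.2 ≤ (c : ℝ) ∧ -p.2 ≤ (d : ℝ)}

private lemma sumfloor_key (w : ℤ) (n : ℕ) :
    ∑ i ∈ Finset.range (2*n+1), ((2*w + (i:ℤ))/2) = (2*(n:ℤ)+1)*w + (n:ℤ)^2 := by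
  induction n with
  | zero => simp
  | succ m ih =>
      have h1 : 2*(m+1)+1 = (2*m+1) + 1 + 1 := by ring
      rw [h1, Finset.sum_range_succ, Finset.sum_range_succ, ih]
      have e1 : (2*w + ((2*m+1 : ℕ) : ℤ))/2 = w + m := by push_cast; omega
      have e2 : (2*w + ((2*m+1+1 : ℕ) : ℤ))/2 = w + m + 1 := by push_cast; omega
      rw [e1, e2]
      push_cast
      ring

theorem stmt17 (a b c d : ℤ)
    (ha : 0 ≤ a) (hb : 0 ≤ b) (hc : 0 ≤ c) (hd : 0 ≤ d)
    (h1 : 0 ≤ c + d) (h2 : 0 ≤ a + b + 2 * d) (h3 : 0 ≤ a + b - 2 * c)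
    -- all occurring fractional parts vanish
    (p1 : (2 : ℤ) ∣ (c - a)) (p2 : (2 : ℤ) ∣ (c - b))
    (p3 : (2 : ℤ) ∣ (a + d)) (p4 : (2 : ℤ) ∣ (b + d)) :
    (Nat.card {z : ℤ × ℤ //
        (((z.1 : ℤ) : ℝ), ((z.2 : ℤ) : ℝ)) ∈
          Pabcd (a : ℚ) (b : ℚ) (c : ℚ) (d : ℚ)} : ℚ) =
      ((d : ℚ) ^ 2 - (c : ℚ) ^ 2 + (b : ℚ) * c + (a : ℚ) * c
          + (b : ℚ) * d + (a : ℚ) * d) / 2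
        + ((a : ℚ) + b) / 2 + d + 1 := by
  obtain ⟨p, hp⟩ := p3
  obtain ⟨q, hq⟩ := p4
  obtain ⟨s1, hs1⟩ := p1
  have hcd : ∃ n : ℕ, c + d = 2 * (n : ℤ) := ⟨((c + d)/2).toNat, by omega⟩
  obtain ⟨n, hn⟩ := hcd
  classical
  set Q : ℤ × ℤ → Prop := fun z => 2*z.1+z.2 ≤ a ∧ -2*z.1+z.2 ≤ b ∧ z.2 ≤ c ∧ -z.2 ≤ d with hQ
  set F : Finset (ℤ × ℤ) := (Finset.Icc (-q) p ×ˢ Finset.Icc (-d) c).filter Q with hF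
  -- membership characterization
  have hmem : ∀ z : ℤ × ℤ,
      ((((z.1 : ℤ) : ℝ), ((z.2 : ℤ) : ℝ)) ∈ Pabcd (a : ℚ) (b : ℚ) (c : ℚ) (d : ℚ)) ↔ z ∈ F := by
    intro z
    have hiff : ((((z.1 : ℤ) : ℝ), ((z.2 : ℤ) : ℝ)) ∈ Pabcd (a : ℚ) (b : ℚ) (c : ℚ) (d : ℚ)) ↔
        Q z := by
      simp only [Pabcd, Set.mem_setOf_eq, hQ]
      constructor
      · rintro ⟨u1, u2, u3, u4⟩
        exact ⟨by exact_mod_cast u1, by exact_mod_cast u2, by exact_mod_cast u3,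
          by exact_mod_cast u4⟩
      · rintro ⟨u1, u2, u3, u4⟩
        exact ⟨by exact_mod_cast u1, by exact_mod_cast u2, by exact_mod_cast u3,
          by exact_mod_cast u4⟩
    rw [hiff, hF, Finset.mem_filter, Finset.mem_product, Finset.mem_Icc, Finset.mem_Icc]
    constructor
    · intro h
      obtain ⟨u1, u2, u3, u4⟩ := h
      exact ⟨⟨⟨by omega, by omega⟩, by omega, by omega⟩, ⟨u1, u2, u3, u4⟩⟩
    · exact fun h => h.2
  -- Nat.card equals F.card
  have hNat : Nat.card {z : ℤ × ℤ //
      (((z.1 : ℤ) : ℝ), ((z.2 : ℤ) : ℝ)) ∈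
        Pabcd (a : ℚ) (b : ℚ) (c : ℚ) (d : ℚ)} = F.card := by
    rw [Nat.card_congr (Equiv.subtypeEquivRight hmem)]
    exact Nat.card_eq_finsetCard F
  -- card as an integer sum over y
  have hsum : (F.card : ℤ) = ∑ y ∈ Finset.Icc (-d) c, ((a - y)/2 + (b - y)/2 + 1) := by
    have step1 : F.card = ∑ y ∈ Finset.Icc (-d) c, ((a - y)/2 + (b - y)/2 + 1).toNat := by
      rw [hF, Finset.card_filter, Finset.sum_product_right]
      refine Finset.sum_congr rfl fun y hy => ?_
      rw [Finset.mem_Icc] at hy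
      rw [← Finset.card_filter]
      have hfe : (Finset.Icc (-q) p).filter (fun x => Q (x, y)) =
          Finset.Icc (-((b - y)/2)) ((a - y)/2) := by
        ext x
        simp only [Finset.mem_filter, Finset.mem_Icc, hQ]
        omega
      rw [hfe, Int.card_Icc]
      congr 1
      omega
    rw [step1, Nat.cast_sum]
    refine Finset.sum_congr rfl fun y hy => ?_
    rw [Finset.mem_Icc] at hy
    rw [Int.toNat_of_nonneg (by omega)]
  -- evaluate the sum
  have heval : ∑ y ∈ Finset.Icc (-d) c, ((a - y)/2 + (b - y)/2 + 1) =
      (2*(n:ℤ)+1)*(p - n) + (n:ℤ)^2 + ((2*(n:ℤ)+1)*(q - n) + (n:ℤ)^2) + (2*(n:ℤ)+1) := by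
    have hcard : (c + 1 - -d).toNat = 2*n+1 := by omega
    rw [Int.Icc_eq_finset_map, Finset.sum_map, hcard]
    have hflip : ∀ f : ℕ → ℤ, ∑ i ∈ Finset.range (2*n+1), f (2*n+1-1-i) =
        ∑ i ∈ Finset.range (2*n+1), f i := fun f => Finset.sum_range_reflect f (2*n+1)
    rw [← hflip]
    have : ∀ i ∈ Finset.range (2*n+1),
        (fun i : ℕ => ((a - ((Nat.castEmbedding.trans (addLeftEmbedding (-d))) i))/2 +
          (b - ((Nat.castEmbedding.trans (addLeftEmbedding (-d))) i))/2 + 1)) (2*n+1-1-i)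
        = (2*(p - n) + (i:ℤ))/2 + ((2*(q - n) + (i:ℤ))/2 + 1) := by
      intro i hi
      rw [Finset.mem_range] at hi
      simp only [Function.Embedding.trans_apply, Nat.castEmbedding_apply, addLeftEmbedding_apply]
      have hcast : ((2*n+1-1-i : ℕ) : ℤ) = 2*(n:ℤ) - (i:ℤ) := by omega
      rw [hcast]
      have e1 : a - (-d + (2*(n:ℤ) - (i:ℤ))) = 2*(p - n) + (i:ℤ) := by omega
      have e2 : b - (-d + (2*(n:ℤ) - (i:ℤ))) = 2*(q - n) + (i:ℤ) := by omega
      rw [e1, e2]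
      ring
    rw [Finset.sum_congr rfl this, Finset.sum_add_distrib, sumfloor_key,
      Finset.sum_add_distrib, sumfloor_key]
    simp [Finset.sum_const]
    ring
  -- finish
  rw [hNat]
  have hZ : (F.card : ℤ) =
      (2*(n:ℤ)+1)*(p - n) + (n:ℤ)^2 + ((2*(n:ℤ)+1)*(q - n) + (n:ℤ)^2) + (2*(n:ℤ)+1) := by
    rw [hsum, heval]
  have hQQ : (F.card : ℚ) =
      (2*(n:ℚ)+1)*((p:ℚ) - n) + (n:ℚ)^2 + ((2*(n:ℚ)+1)*((q:ℚ) - n) + (n:ℚ)^2) + (2*(n:ℚ)+1) := by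
    exact_mod_cast congrArg (fun t : ℤ => (t : ℚ)) hZ
  have ea : (a : ℚ) = 2*(p:ℚ) - (d:ℚ) := by exact_mod_cast (by omega : a = 2*p - d)
  have eb : (b : ℚ) = 2*(q:ℚ) - (d:ℚ) := by exact_mod_cast (by omega : b = 2*q - d)
  have ec : (c : ℚ) = 2*(n:ℚ) - (d:ℚ) := by exact_mod_cast (by omega : c = 2*(n:ℤ) - d)
  rw [ea, eb, ec]
  rw [hQQ]
  ring
end
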